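/- arXiv:2511.10202 — 8 statements merged into one kernel-verified Lean document; each statement's English description precedes it below -/
import Mathlib

section
/- If a graph G has a matching M that is maximum among matchings avoiding a vertex set V_δ, and G contains no collection of δ+1 vertex-disjoint connected three-vertex subgraphs where δ is the maximum size of such a collection and V_δ covers such a maximum collection, then the subgraph of G induced on the vertices outside V_δ has no edges other than those of M; i.e., every edge of G − V_δ belongs to the induced matching M. -/
/-!
Two edges of `G - Vδ` sharing a vertex form a connected three-vertex subgraph avoiding `Vδ`,
which could be added to the maximum packing; so every edge of `G - Vδ` is disjoint from all
edges of `M`, and by maximality of `M` it already lies in `M`.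
-/

lemma Finset.mem_of_forall_card_le {α : Type*} [DecidableEq α] {p : α → Prop}
    {r : α → α → Prop} [Std.Symm r] {Q : Finset α} (hQ : ∀ x ∈ Q, p x)
    (hQr : (Q : Set α).Pairwise r)
    (hmax : ∀ Q' : Finset α, (∀ x ∈ Q', p x) → (Q' : Set α).Pairwise r → Q'.card ≤ Q.card)
    {a : α} (ha : p a) (har : ∀ b ∈ Q, a ≠ b → r a b) : a ∈ Q := by
  by_contra haQ
  have hle := hmax (insert a Q) (Finset.forall_mem_insert _ _ _ |>.2 ⟨ha, hQ⟩)
    (by rw [Finset.coe_insert]; exact hQr.insert_of_symm har)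
  rw [Finset.card_insert_of_notMem haQ] at hle
  omega

namespace SimpleGraph

variable {V : Type*} (G : SimpleGraph V)

lemma induce_triple_connected_of_adj {a b c : V} (hab : G.Adj a b) (hac : G.Adj a c) :
    (G.induce ({a, b, c} : Set V)).Connected := by
  have h := induce_union_connected (induce_pair_connected_of_adj hab).preconnected
    (induce_pair_connected_of_adj hac).preconnected (s := {a, b}) (t := {a, c}) ⟨a, by simp⟩
  have habc : ({a, b, c} : Set V) = {a, b} ∪ {a, c} := by
    ext
    simp only [Set.mem_insert_iff, Set.mem_singleton_iff, Set.mem_union]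
    tauto
  rwa [habc]

variable {G}

lemma exists_adj_adj_of_mem_edgeSet {e f : Sym2 V} {v : V} (he : e ∈ G.edgeSet)
    (hf : f ∈ G.edgeSet) (hef : e ≠ f) (hve : v ∈ e) (hvf : v ∈ f) :
    ∃ b c, G.Adj v b ∧ G.Adj v c ∧ b ≠ c ∧ e = s(v, b) ∧ f = s(v, c) := by
  obtain ⟨b, rfl⟩ := Sym2.mem_iff_exists.1 hve
  obtain ⟨c, rfl⟩ := Sym2.mem_iff_exists.1 hvf
  exact ⟨b, c, he, hf, fun hbc => hef (hbc ▸ rfl), rfl, rfl⟩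

lemma not_disjoint_biUnion_of_adj_of_adj [DecidableEq V] {P : Finset (Finset V)}
    (hP : ∀ s ∈ P, s.card = 3 ∧ (G.induce (s : Set V)).Connected)
    (hPdisj : (P : Set (Finset V)).Pairwise Disjoint)
    (hmax : ∀ Q : Finset (Finset V), (∀ s ∈ Q, s.card = 3 ∧ (G.induce (s : Set V)).Connected) →
      (Q : Set (Finset V)).Pairwise Disjoint → Q.card ≤ P.card)
    {a b c : V} (hab : G.Adj a b) (hac : G.Adj a c) (hbc : b ≠ c) :
    ¬ Disjoint ({a, b, c} : Finset V) (P.biUnion id) := by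
  intro hdisj
  have hconn : (G.induce (({a, b, c} : Finset V) : Set V)).Connected := by
    rw [Finset.coe_insert, Finset.coe_pair]
    exact G.induce_triple_connected_of_adj hab hac
  have hmem : ({a, b, c} : Finset V) ∈ P := Finset.mem_of_forall_card_le hP hPdisj hmax
    ⟨Finset.card_eq_three.2 ⟨a, b, c, hab.ne, hac.ne, hbc, rfl⟩, hconn⟩
    fun t ht _ => hdisj.mono_right (Finset.subset_biUnion_of_mem id ht)
  exact Finset.disjoint_left.1 hdisj (Finset.mem_insert_self a _)
    (Finset.subset_biUnion_of_mem id hmem (Finset.mem_insert_self a _))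

end SimpleGraph

theorem stmt0_general {V : Type*} [DecidableEq V]
    (G : SimpleGraph V) (δ : ℕ) (P : Finset (Finset V)) (Vδ : Finset V)
    (M : Finset (Sym2 V))
    (hP : ∀ s ∈ P, s.card = 3 ∧ (G.induce (s : Set V)).Connected)
    (hPdisj : ∀ s ∈ P, ∀ t ∈ P, s ≠ t → Disjoint s t)
    (hPcard : P.card = δ)
    (hmax : ∀ Q : Finset (Finset V),
      (∀ s ∈ Q, s.card = 3 ∧ (G.induce (s : Set V)).Connected) →
      (∀ s ∈ Q, ∀ t ∈ Q, s ≠ t → Disjoint s t) → Q.card ≤ δ)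
    (hVδ : Vδ = P.biUnion id)
    (hM : ∀ e ∈ M, e ∈ G.edgeSet ∧ ∀ v ∈ e, v ∉ Vδ)
    (hMmatch : ∀ e ∈ M, ∀ f ∈ M, e ≠ f → ∀ v, v ∈ e → v ∉ f)
    (hMmax : ∀ M' : Finset (Sym2 V),
      (∀ e ∈ M', e ∈ G.edgeSet ∧ ∀ v ∈ e, v ∉ Vδ) →
      (∀ e ∈ M', ∀ f ∈ M', e ≠ f → ∀ v, v ∈ e → v ∉ f) →
      M'.card ≤ M.card) :
    ∀ e ∈ G.edgeSet, (∀ v ∈ e, v ∉ Vδ) → e ∈ M := by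
  subst hPcard hVδ
  intro e he heV
  have : Std.Symm fun e f : Sym2 V => ∀ v ∈ e, v ∉ f := ⟨fun _ _ h v hvf hve => h v hve hvf⟩
  by_contra heM
  obtain ⟨f, hfM, hef, v, hve, hvf⟩ : ∃ f ∈ M, e ≠ f ∧ ∃ v ∈ e, v ∈ f := by
    by_contra! h
    exact heM (Finset.mem_of_forall_card_le hM (fun e he f hf => hMmatch e he f hf)
      (fun M' hM' hM'match => hMmax M' hM' fun e he f hf => hM'match he hf) ⟨he, heV⟩ h)
  obtain ⟨b, c, hvb, hvc, hbc, rfl, rfl⟩ :=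
    SimpleGraph.exists_adj_adj_of_mem_edgeSet he (hM _ hfM).1 hef hve hvf
  refine SimpleGraph.not_disjoint_biUnion_of_adj_of_adj hP (fun s hs t ht => hPdisj s hs t ht)
    (fun Q hQ hQdisj => hmax Q hQ fun s hs t ht => hQdisj hs ht) hvb hvc hbc
    (Finset.disjoint_left.2 fun x hx => ?_)
  simp only [Finset.mem_insert, Finset.mem_singleton] at hx
  rcases hx with rfl | rfl | rfl
  exacts [heV x hve, heV x (Sym2.mem_mk_right _ _), (hM _ hfM).2 x (Sym2.mem_mk_right _ _)]

/-- If `P` is a maximum-size collection of pairwise vertex-disjoint connected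
three-vertex subgraphs of `G` (of size `δ`), `Vδ` its vertex set, and `M` a maximum matching
of `G − Vδ`, then every edge of `G − Vδ` belongs to `M`. -/
theorem stmt0 {V : Type*} [Fintype V] [DecidableEq V]
    (G : SimpleGraph V) (δ : ℕ) (P : Finset (Finset V)) (Vδ : Finset V)
    (M : Finset (Sym2 V))
    (hP : ∀ s ∈ P, s.card = 3 ∧ (G.induce (s : Set V)).Connected)
    (hPdisj : ∀ s ∈ P, ∀ t ∈ P, s ≠ t → Disjoint s t)
    (hPcard : P.card = δ)
    (hmax : ∀ Q : Finset (Finset V),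
      (∀ s ∈ Q, s.card = 3 ∧ (G.induce (s : Set V)).Connected) →
      (∀ s ∈ Q, ∀ t ∈ Q, s ≠ t → Disjoint s t) → Q.card ≤ δ)
    (hVδ : Vδ = P.biUnion id)
    (hM : ∀ e ∈ M, e ∈ G.edgeSet ∧ ∀ v ∈ e, v ∉ Vδ)
    (hMmatch : ∀ e ∈ M, ∀ f ∈ M, e ≠ f → ∀ v, v ∈ e → v ∉ f)
    (hMmax : ∀ M' : Finset (Sym2 V),
      (∀ e ∈ M', e ∈ G.edgeSet ∧ ∀ v ∈ e, v ∉ Vδ) →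
      (∀ e ∈ M', ∀ f ∈ M', e ≠ f → ∀ v, v ∈ e → v ∉ f) →
      M'.card ≤ M.card) :
    ∀ e ∈ G.edgeSet, (∀ v ∈ e, v ∉ Vδ) → e ∈ M :=
  stmt0_general G δ P Vδ M hP hPdisj hPcard hmax hVδ hM hMmatch hMmax
end

section
/- Let G be a graph with lists L satisfying v ∈ L(v) and property (P1) (x ∈ L(y) implies L(x) ⊆ L(y)). Construct G' by: removing all vertices z that lie in L(x) ∩ L(y) for some edge {x,y} of G, and adding all edges between L(x) and L(y) (restricted to remaining vertices) for every edge {x,y} of G with x, y remaining. Then for any two remaining vertices x, y with L(x) ⊆ L(y), the neighborhood of y in G' is contained in the neighborhood of x in G'. -/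
/-- The surviving vertices of the auxiliary graph `G'`: vertices not lying in a list
intersection `L(x) ∩ L(y)` over an edge `{x,y}` of `G`. -/
def survive {V : Type*} (G : SimpleGraph V) (L : V → Set V) : Set V :=
  {v | ¬ ∃ x y, G.Adj x y ∧ v ∈ L x ∧ v ∈ L y}

/-- Adjacency of the auxiliary graph `G'`: for every edge `{x,y}` of `G` with both
endpoints surviving, all (surviving) pairs between `L(x)` and `L(y)` are edges. -/
def auxAdj {V : Type*} (G : SimpleGraph V) (L : V → Set V) (a b : V) : Prop :=
  a ∈ survive G L ∧ b ∈ survive G L ∧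
    ∃ x y, G.Adj x y ∧ x ∈ survive G L ∧ y ∈ survive G L ∧
      ((a ∈ L x ∧ b ∈ L y) ∨ (a ∈ L y ∧ b ∈ L x))

theorem auxAdj_of_forall_mem {V : Type*} {G : SimpleGraph V} {L : V → Set V} {a a' b : V}
    (ha' : a' ∈ survive G L) (hmem : ∀ u, a ∈ L u → a' ∈ L u) (hab : auxAdj G L a b) :
    auxAdj G L a' b := by
  obtain ⟨-, hb, u, v, huv, hu, hv, ⟨hau, hbv⟩ | ⟨hav, hbu⟩⟩ := hab
  · exact ⟨ha', hb, u, v, huv, hu, hv, Or.inl ⟨hmem u hau, hbv⟩⟩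
  · exact ⟨ha', hb, u, v, huv, hu, hv, Or.inr ⟨hmem v hav, hbu⟩⟩

theorem mem_of_subset_of_mem {V : Type*} {L : V → Set V} (hself : ∀ v, v ∈ L v)
    (hP1 : ∀ x y, x ∈ L y → L x ⊆ L y) {x y u : V} (hxy : L x ⊆ L y) (hyu : y ∈ L u) :
    x ∈ L u :=
  hP1 y u hyu (hxy (hself x))

theorem stmt8_general {V : Type*} (G : SimpleGraph V) (L : V → Set V)
    (hself : ∀ v, v ∈ L v)
    (hP1 : ∀ x y, x ∈ L y → L x ⊆ L y)
    (x y : V) (hx : x ∈ survive G L)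
    (hxy : L x ⊆ L y) :
    ∀ z, auxAdj G L y z → auxAdj G L x z :=
  fun _ => auxAdj_of_forall_mem hx fun _ => mem_of_subset_of_mem hself hP1 hxy

/-- for surviving vertices `x, y` with `L(x) ⊆ L(y)`, the `G'`-neighborhood of
`y` is contained in the `G'`-neighborhood of `x`. -/
theorem stmt8 {V : Type*} (G : SimpleGraph V) (L : V → Set V)
    (hself : ∀ v, v ∈ L v)
    (hP1 : ∀ x y, x ∈ L y → L x ⊆ L y)
    (x y : V) (hx : x ∈ survive G L) (hy : y ∈ survive G L)
    (hxy : L x ⊆ L y) :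
    ∀ z, auxAdj G L y z → auxAdj G L x z :=
  stmt8_general G L hself hP1 x y hx hxy
end

section
/- Let F_1 be a forest with edge partition (E_P, E_Δ), components V_1,...,V_q of (V, E_Δ), and a hereditary domination function R with R(x) contained in the component of x and satisfying x ∈ R(x) and (y ∈ R(x) → R(y) ⊆ R(x)). Construct F_2 on the same vertex set by taking, for each E_P edge {x,y} with x ∈ V_i, y ∈ V_j (i ≠ j), all edges between R(x) and R(y), and assume between any two components there is at most one E_P edge. Then each component V_i is an independent set in F_2, and for vertices x, y in the same component with x ∈ R(y), the F_2-neighborhood of y is contained in the F_2-neighborhood of x. -/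
/-- Adjacency of the graph `F₂`: for each `E_P`-edge `{x,y}` of `F₁` between distinct
`E_Δ`-components, all pairs between `R(x)` and `R(y)` are edges. -/
def adjF2 {V : Type*} (F : SimpleGraph V) (EΔ : Set (Sym2 V)) (R : V → Set V)
    (a b : V) : Prop :=
  ∃ x y, F.Adj x y ∧ s(x, y) ∉ EΔ ∧
    ¬ (SimpleGraph.fromEdgeSet EΔ).Reachable x y ∧
    ((a ∈ R x ∧ b ∈ R y) ∨ (a ∈ R y ∧ b ∈ R x))

section

variable {V : Type*} {F : SimpleGraph V} {EΔ : Set (Sym2 V)} {R : V → Set V}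

theorem not_reachable_of_adjF2
    (hRcomp : ∀ x y, y ∈ R x → (SimpleGraph.fromEdgeSet EΔ).Reachable x y)
    {a b : V} (h : adjF2 F EΔ R a b) : ¬ (SimpleGraph.fromEdgeSet EΔ).Reachable a b := by
  obtain ⟨u, v, -, -, huv, ⟨ha, hb⟩ | ⟨ha, hb⟩⟩ := h <;> intro hab
  · exact huv ((hRcomp u a ha).trans (hab.trans (hRcomp v b hb).symm))
  · exact huv ((hRcomp u b hb).trans (hab.symm.trans (hRcomp v a ha).symm))

theorem adjF2_of_forall_mem_imp {x y z : V} (hxy : ∀ u, y ∈ R u → x ∈ R u)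
    (h : adjF2 F EΔ R y z) : adjF2 F EΔ R x z := by
  obtain ⟨u, v, huv, hE, hnr, ⟨hy, hz⟩ | ⟨hy, hz⟩⟩ := h
  · exact ⟨u, v, huv, hE, hnr, Or.inl ⟨hxy u hy, hz⟩⟩
  · exact ⟨u, v, huv, hE, hnr, Or.inr ⟨hxy v hy, hz⟩⟩

end

theorem stmt10_general {V : Type*} (F : SimpleGraph V) (EΔ : Set (Sym2 V)) (R : V → Set V)
    (hRtrans : ∀ x y, y ∈ R x → R y ⊆ R x)
    (hRcomp : ∀ x y, y ∈ R x → (SimpleGraph.fromEdgeSet EΔ).Reachable x y) :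
    (∀ a b : V, (SimpleGraph.fromEdgeSet EΔ).Reachable a b → ¬ adjF2 F EΔ R a b) ∧
    (∀ x y : V, (SimpleGraph.fromEdgeSet EΔ).Reachable x y → x ∈ R y →
      ∀ z, adjF2 F EΔ R y z → adjF2 F EΔ R x z) :=
  ⟨fun _ _ hab h => not_reachable_of_adjF2 hRcomp h hab,
    fun _ y _ hx _ => adjF2_of_forall_mem_imp fun u hy => hRtrans u y hy hx⟩

/-- each `E_Δ`-component is an independent set in `F₂`; and for `x, y` in the
same component with `x ∈ R(y)`, the `F₂`-neighborhood of `y` is contained in that of `x`. -/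
theorem stmt10 {V : Type*} (F : SimpleGraph V) (EΔ : Set (Sym2 V)) (R : V → Set V)
    (hEΔ : EΔ ⊆ F.edgeSet) (hacyclic : F.IsAcyclic)
    (hRrefl : ∀ x, x ∈ R x)
    (hRtrans : ∀ x y, y ∈ R x → R y ⊆ R x)
    (hRcomp : ∀ x y, y ∈ R x → (SimpleGraph.fromEdgeSet EΔ).Reachable x y)
    (honeEdge : ∀ a b a' b' : V, F.Adj a b → F.Adj a' b' →
      s(a, b) ∉ EΔ → s(a', b') ∉ EΔ →
      (SimpleGraph.fromEdgeSet EΔ).Reachable a a' →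
      (SimpleGraph.fromEdgeSet EΔ).Reachable b b' →
      ¬ (SimpleGraph.fromEdgeSet EΔ).Reachable a b →
      s(a, b) = s(a', b')) :
    (∀ a b : V, (SimpleGraph.fromEdgeSet EΔ).Reachable a b → ¬ adjF2 F EΔ R a b) ∧
    (∀ x y : V, (SimpleGraph.fromEdgeSet EΔ).Reachable x y → x ∈ R y →
      ∀ z, adjF2 F EΔ R y z → adjF2 F EΔ R x z) :=
  stmt10_general F EΔ R hRtrans hRcomp
end

section
/- Let F_1 be a forest with edge partition (E_P, E_Δ), components V_1,...,V_q of the E_Δ-subgraph, and R : V → Set V with R(x) contained in the component of x. Then the graph F_2, whose edges are all pairs in E(R(x), R(y)) over E_P-edges {x,y} between distinct components, is bipartite. -/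
open SimpleGraph

section Aux

variable {V : Type*} {F : SimpleGraph V}

open Classical in
/-- Parity of the number of edges of a walk lying outside `S`. -/
noncomputable def wpar (S : Set (Sym2 V)) : ∀ {u v : V}, F.Walk u v → Bool
  | _, _, .nil => false
  | _, _, .cons (u := a) (v := b) _ p => xor (decide (s(a, b) ∉ S)) (wpar S p)

@[simp] lemma wpar_nil {S : Set (Sym2 V)} {u : V} :
    wpar S (.nil : F.Walk u u) = false := rfl

open Classical in
@[simp] lemma wpar_cons {S : Set (Sym2 V)} {u v w : V} (h : F.Adj u v) (p : F.Walk v w) :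
    wpar S (.cons h p) = xor (decide (s(u, v) ∉ S)) (wpar S p) := by
  rfl

@[simp] lemma wpar_copy {S : Set (Sym2 V)} {u v u' v' : V} (w : F.Walk u v)
    (hu : u = u') (hv : v = v') : wpar S (w.copy hu hv) = wpar S w := by
  subst hu; subst hv; rfl

lemma wpar_append {S : Set (Sym2 V)} {u v w : V} (p : F.Walk u v) (q : F.Walk v w) :
    wpar S (p.append q) = xor (wpar S p) (wpar S q) := by
  induction p with
  | nil => simp
  | cons h p ih => simp [ih, Bool.xor_assoc]

lemma wpar_eq_false {S : Set (Sym2 V)} {u v : V} (p : F.Walk u v)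
    (h : ∀ e ∈ p.edges, e ∈ S) : wpar S p = false := by
  induction p with
  | nil => rfl
  | @cons a b c ha p ih =>
    rw [wpar_cons]
    have h1 : s(a, b) ∈ S := h s(a, b) (by simp)
    simp only [h1, not_true_eq_false, decide_false, Bool.false_xor]
    exact ih fun e he => h e (by simp [he])

lemma wpar_bypass [DecidableEq V] (hac : F.IsAcyclic) (S : Set (Sym2 V)) :
    ∀ n {u v : V} (w : F.Walk u v), w.length ≤ n → wpar S w.bypass = wpar S w := by
  intro n
  induction n with
  | zero =>
    intro u v w hw
    cases w with
    | nil => rfl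
    | cons h p => simp at hw
  | succ n ih =>
    intro u v w hw
    cases w with
    | nil => rfl
    | @cons _ m _ ha p =>
      rw [Walk.length_cons] at hw
      have hp : p.length ≤ n := by omega
      rw [Walk.bypass]
      split_ifs with hs
      · -- goal: wpar S (p.bypass.dropUntil u hs) = wpar S (cons ha p)
        set t := p.bypass.takeUntil _ hs with ht_def
        set d := p.bypass.dropUntil _ hs with hd_def
        have hspec : t.append d = p.bypass := Walk.take_spec p.bypass hs
        have h2 : xor (wpar S t) (wpar S d) = wpar S p := by
          rw [← wpar_append, hspec, ih p hp]
        have ht_le : t.length ≤ n :=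
          le_trans (Walk.length_takeUntil_le _ _)
            (le_trans (Walk.length_bypass_le p) hp)
        have hsingle : t.bypass = Walk.cons ha.symm Walk.nil := by
          have := hac.path_unique ⟨t.bypass, t.bypass_isPath⟩ (Path.singleton ha.symm)
          exact congrArg Subtype.val this
        have ht_val : wpar S t = wpar S (Walk.cons ha.symm Walk.nil) := by
          rw [← ih t ht_le, hsingle]
        rw [wpar_cons, wpar_nil, Bool.xor_false, Sym2.eq_swap] at ht_val
        rw [wpar_cons, ← ht_val, ← h2]
        cases wpar S t <;> cases wpar S d <;> simp
      · rw [wpar_cons, wpar_cons, ih p hp]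

lemma wpar_unique [DecidableEq V] (hac : F.IsAcyclic) (S : Set (Sym2 V)) {u v : V}
    (w₁ w₂ : F.Walk u v) : wpar S w₁ = wpar S w₂ := by
  have h1 := wpar_bypass hac S w₁.length w₁ le_rfl
  have h2 := wpar_bypass hac S w₂.length w₂ le_rfl
  have h3 : w₁.bypass = w₂.bypass :=
    congrArg Subtype.val
      (hac.path_unique ⟨w₁.bypass, w₁.bypass_isPath⟩ ⟨w₂.bypass, w₂.bypass_isPath⟩)
  rw [← h1, ← h2, h3]

/-- a representative of the `F`-component of `v` -/
noncomputable def frep (F : SimpleGraph V) (v : V) : V :=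
  (Quotient.mk F.reachableSetoid v).out

lemma frep_reachable (F : SimpleGraph V) (v : V) : F.Reachable (frep F v) v :=
  @Quotient.exact _ F.reachableSetoid _ _ (Quotient.out_eq _)

lemma frep_eq_of_reachable {x y : V} (h : F.Reachable x y) : frep F x = frep F y :=
  congrArg Quotient.out (Quotient.sound (by exact h))

/-- The coloring: parity of non-`S` edges on a walk from the component representative. -/
noncomputable def col (F : SimpleGraph V) (S : Set (Sym2 V)) (v : V) : Bool :=
  wpar S (frep_reachable F v).some

lemma col_eq_of_S_reachable [DecidableEq V] (hac : F.IsAcyclic) {S : Set (Sym2 V)}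
    (hS : S ⊆ F.edgeSet) {x y : V} (h : (fromEdgeSet S).Reachable x y) :
    col F S x = col F S y := by
  have hle : fromEdgeSet S ≤ F := by
    intro a b hab
    rw [fromEdgeSet_adj] at hab
    exact hS hab.1
  obtain ⟨w⟩ := h
  have hrep : frep F x = frep F y := frep_eq_of_reachable ⟨w.mapLe hle⟩
  have hedges : ∀ e ∈ (w.mapLe hle).edges, e ∈ S := by
    intro e he
    rw [Walk.mapLe, Walk.edges_map] at he
    obtain ⟨e', he', rfl⟩ := List.mem_map.mp he
    have h1 : e' ∈ (fromEdgeSet S).edgeSet := w.edges_subset_edgeSet he'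
    rw [edgeSet_fromEdgeSet] at h1
    have h2 : Sym2.map (Hom.ofLE hle) e' = e' := by
      induction e' using Sym2.ind with
      | _ a b => rfl
    rw [h2]
    exact h1.1
  have hw0 : wpar S (w.mapLe hle) = false := wpar_eq_false _ hedges
  unfold col
  rw [wpar_unique hac S ((frep_reachable F y).some)
    (((frep_reachable F x).some.append (w.mapLe hle)).copy hrep rfl),
    wpar_copy, wpar_append, hw0, Bool.xor_false]

lemma col_adj_ne [DecidableEq V] (hac : F.IsAcyclic) {S : Set (Sym2 V)} {x y : V}
    (h : F.Adj x y) (he : s(x, y) ∉ S) : col F S x ≠ col F S y := by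
  have hrep : frep F x = frep F y := frep_eq_of_reachable h.reachable
  unfold col
  rw [wpar_unique hac S ((frep_reachable F y).some)
    (((frep_reachable F x).some.append (.cons h .nil)).copy hrep rfl),
    wpar_copy, wpar_append, wpar_cons, wpar_nil]
  simp [he]

end Aux

/-- if `F₁` is a forest with edge partition `(E_P, E_Δ)` and `R(x)` is a
subset of the `E_Δ`-component of `x` containing `x`, then `F₂` is bipartite: it admits a
proper 2-coloring. -/
theorem stmt11 {V : Type*} (F : SimpleGraph V) (EΔ : Set (Sym2 V)) (R : V → Set V)
    (hEΔ : EΔ ⊆ F.edgeSet) (hacyclic : F.IsAcyclic)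
    (hRrefl : ∀ x, x ∈ R x)
    (hRcomp : ∀ x y, y ∈ R x → (SimpleGraph.fromEdgeSet EΔ).Reachable x y) :
    ∃ c : V → Bool, ∀ a b : V, adjF2 F EΔ R a b → c a ≠ c b := by
  classical
  refine ⟨col F EΔ, ?_⟩
  rintro a b ⟨x, y, hxy, hne, -, hmem⟩
  have hx : col F EΔ x ≠ col F EΔ y := col_adj_ne hacyclic hxy hne
  rcases hmem with ⟨ha, hb⟩ | ⟨ha, hb⟩
  · rw [← col_eq_of_S_reachable hacyclic hEΔ (hRcomp x a ha),
      ← col_eq_of_S_reachable hacyclic hEΔ (hRcomp y b hb)]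
    exact hx
  · rw [← col_eq_of_S_reachable hacyclic hEΔ (hRcomp y a ha),
      ← col_eq_of_S_reachable hacyclic hEΔ (hRcomp x b hb)]
    exact fun hh => hx hh.symm
end

section
/- Given a graph G without isolated vertices, construct a graph H whose vertex set consists of three vertices e_x, e_{xy}, e_y for each edge {x,y} of G, with edges {e_{xy}, e_x} and {e_{xy}, e_y}, and partition the edges of H into groups (hedges) E_z for each vertex z of G, where E_z contains all edges of the form {e_{uz}, e_z}. Then G has a vertex cover of size at most k if and only if there is a set U of at most k hedges of H such that removing all edges of the hedges in U from H leaves a graph with no induced P_3. -/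
/-- Adjacency of the hedge graph `H` built from `G`, after removing the set of hedges `U`.
For each edge `{x,y}` of `G` there are three vertices `(s(x,y), none) = e_{xy}`,
`(s(x,y), some x) = e_x` and `(s(x,y), some y) = e_y`, with edges `{e_{xy}, e_x}`
(belonging to hedge `x`) and `{e_{xy}, e_y}` (belonging to hedge `y`); an edge survives
iff its hedge is not in `U`. -/
def hedgeAdj {V : Type*} (G : SimpleGraph V) (U : Set V)
    (a b : Sym2 V × Option V) : Prop :=
  ∃ x y : V, G.Adj x y ∧ x ∉ U ∧
    ((a = (s(x, y), (none : Option V)) ∧ b = (s(x, y), some x)) ∨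
     (a = (s(x, y), some x) ∧ b = (s(x, y), (none : Option V))))

/-!
After removing the hedges `U`, the gadget `e_x – e_{xy} – e_y` of an edge `xy` keeps its
half at `e_x` iff `x ∉ U`. Distinct gadgets are disjoint and `e_x`, `e_y` are never adjacent,
so an induced `P₃` is exactly a gadget with both halves intact, i.e. an edge of `G` that `U`
misses. Hence the remaining graph is a union of cliques iff `U` is a vertex cover.
-/

namespace HedgeGraph

variable {V : Type*} {G : SimpleGraph V} {U : Set V} {a b c : Sym2 V × Option V}

theorem hedgeAdj_comm : hedgeAdj G U a b ↔ hedgeAdj G U b a := by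
  unfold hedgeAdj
  constructor <;>
  · rintro ⟨x, y, hxy, hx, h | h⟩
    exacts [⟨x, y, hxy, hx, .inr h.symm⟩, ⟨x, y, hxy, hx, .inl h.symm⟩]

theorem hedgeAdj_some_none {x y : V} (hxy : G.Adj x y) (hx : x ∉ U) :
    hedgeAdj G U (s(x, y), some x) (s(x, y), none) :=
  ⟨x, y, hxy, hx, .inr ⟨rfl, rfl⟩⟩

theorem not_hedgeAdj_some_some {e e' : Sym2 V} {x y : V} :
    ¬ hedgeAdj G U (e, some x) (e', some y) := by
  rintro ⟨_, _, _, _, ⟨h, -⟩ | ⟨-, h⟩⟩ <;> simp at h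

theorem eq_of_hedgeAdj_some_left {e : Sym2 V} {z : V} (h : hedgeAdj G U (e, some z) a) :
    a = (e, none) := by
  obtain ⟨x, y, -, -, ⟨h₁, -⟩ | ⟨h₁, rfl⟩⟩ := h
  · simp at h₁
  · rw [(Prod.mk.inj h₁).1]

theorem exists_of_hedgeAdj_none_left {e : Sym2 V} (h : hedgeAdj G U (e, none) a) :
    ∃ x y, G.Adj x y ∧ x ∉ U ∧ e = s(x, y) ∧ a = (e, some x) := by
  obtain ⟨x, y, hxy, hx, ⟨h₁, rfl⟩ | ⟨h₁, -⟩⟩ := h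
  · exact ⟨x, y, hxy, hx, (Prod.mk.inj h₁).1, by rw [(Prod.mk.inj h₁).1]⟩
  · simp at h₁

theorem eq_of_hedgeAdj_of_hedgeAdj (hU : G.IsVertexCover U)
    (hba : hedgeAdj G U b a) (hbc : hedgeAdj G U b c) : a = c := by
  obtain ⟨e, _ | z⟩ := b
  · obtain ⟨x, y, hxy, hx, rfl, rfl⟩ := exists_of_hedgeAdj_none_left hba
    obtain ⟨x', y', -, hx', he, rfl⟩ := exists_of_hedgeAdj_none_left hbc
    obtain rfl | hne := eq_or_ne x x'
    · rfl
    obtain ⟨rfl, rfl⟩ | ⟨rfl, rfl⟩ := Sym2.eq_iff.mp he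
    · exact absurd rfl hne
    · exact (hU hxy).elim (absurd · hx) (absurd · hx')
  · rw [eq_of_hedgeAdj_some_left hba, eq_of_hedgeAdj_some_left hbc]

theorem isVertexCover_of_hedgeAdj_trans
    (hU : ∀ a b c, hedgeAdj G U a b → hedgeAdj G U b c → a ≠ c → hedgeAdj G U a c) :
    G.IsVertexCover U := by
  intro x y hxy
  by_contra! ⟨hx, hy⟩
  have hxm : hedgeAdj G U (s(x, y), some x) (s(x, y), none) := hedgeAdj_some_none hxy hx
  have hmy : hedgeAdj G U (s(x, y), none) (s(x, y), some y) := by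
    rw [hedgeAdj_comm, Sym2.eq_swap]
    exact hedgeAdj_some_none hxy.symm hy
  exact not_hedgeAdj_some_some <| hU _ _ _ hxm hmy (by simp [hxy.ne])

end HedgeGraph

open HedgeGraph in
theorem stmt12_general {V : Type*}
    (G : SimpleGraph V) (k : ℕ) :
    (∃ S : Finset V, (∀ a b, G.Adj a b → a ∈ S ∨ b ∈ S) ∧ S.card ≤ k) ↔
    (∃ U : Finset V, U.card ≤ k ∧
      ∀ a b c : Sym2 V × Option V,
        hedgeAdj G (↑U) a b → hedgeAdj G (↑U) b c → a ≠ c → hedgeAdj G (↑U) a c) := by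
  constructor
  · rintro ⟨S, hS, hcard⟩
    refine ⟨S, hcard, fun a b c hab hbc hac => ?_⟩
    exact absurd (eq_of_hedgeAdj_of_hedgeAdj (fun x y => hS x y) (hedgeAdj_comm.mp hab) hbc) hac
  · rintro ⟨U, hcard, hU⟩
    exact ⟨U, fun x y hxy => isVertexCover_of_hedgeAdj_trans hU hxy, hcard⟩

/-- `G` (without isolated vertices) has a vertex cover of size at most `k`
iff at most `k` hedges can be removed from `H` so that no induced `P₃` remains. -/
theorem stmt12 {V : Type*} [Fintype V] [DecidableEq V]
    (G : SimpleGraph V) (hniso : ∀ v : V, ∃ u, G.Adj v u) (k : ℕ) :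
    (∃ S : Finset V, (∀ a b, G.Adj a b → a ∈ S ∨ b ∈ S) ∧ S.card ≤ k) ↔
    (∃ U : Finset V, U.card ≤ k ∧
      ∀ a b c : Sym2 V × Option V,
        hedgeAdj G (↑U) a b → hedgeAdj G (↑U) b c → a ≠ c → hedgeAdj G (↑U) a c) :=
  stmt12_general G k
end

section
/- Let G be a graph with lists L satisfying v ∈ L(v) and property (P1), and let G' be the auxiliary graph obtained by removing vertices in pairwise list-intersections over edges and adding all E(L(x),L(y)) edges for surviving edges {x,y}. If S is a minimal solution of Multi-Vertex Cover on G (a vertex cover with L(S)=S, minimal in the stated sense), then S ∩ V(G') is a vertex cover of G'. -/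
section ListClosed

variable {V : Type*} {G : SimpleGraph V} {L : V → Set V} {S : Set V}

theorem subset_of_biUnion_eq (hclosed : (⋃ v ∈ S, L v) = S) {v : V} (hv : v ∈ S) :
    L v ⊆ S :=
  hclosed ▸ Set.subset_biUnion_of_mem hv

theorem mem_or_mem_of_adj_of_mem_lists (hcover : ∀ a b, G.Adj a b → a ∈ S ∨ b ∈ S)
    (hclosed : (⋃ v ∈ S, L v) = S) {x y a b : V} (hxy : G.Adj x y)
    (ha : a ∈ L x) (hb : b ∈ L y) : a ∈ S ∨ b ∈ S :=
  (hcover x y hxy).imp (subset_of_biUnion_eq hclosed · ha)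
    (subset_of_biUnion_eq hclosed · hb)

end ListClosed

theorem stmt15_general {V : Type*} (G : SimpleGraph V) (L : V → Set V) (S : Set V)
    (hcover : ∀ a b, G.Adj a b → a ∈ S ∨ b ∈ S)
    (hclosed : (⋃ v ∈ S, L v) = S) :
    ∀ a b, auxAdj G L a b → a ∈ S ∩ survive G L ∨ b ∈ S ∩ survive G L := by
  rintro a b ⟨ha, hb, x, y, hxy, -, -, ⟨hax, hby⟩ | ⟨hay, hbx⟩⟩
  · exact (mem_or_mem_of_adj_of_mem_lists hcover hclosed hxy hax hby).imp
      (⟨·, ha⟩) (⟨·, hb⟩)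
  · exact (mem_or_mem_of_adj_of_mem_lists hcover hclosed hxy.symm hay hbx).imp
      (⟨·, ha⟩) (⟨·, hb⟩)

/-- if `S` is a minimal Multi-Vertex-Cover solution on `G` (a vertex cover
with `L(S) = S`, minimal in the stated sense), then `S ∩ V(G')` is a vertex cover of the
auxiliary graph `G'`. -/
theorem stmt15 {V : Type*} (G : SimpleGraph V) (L : V → Set V) (S : Set V)
    (hself : ∀ v, v ∈ L v)
    (hP1 : ∀ x y, x ∈ L y → L x ⊆ L y)
    (hcover : ∀ a b, G.Adj a b → a ∈ S ∨ b ∈ S)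
    (hclosed : (⋃ v ∈ S, L v) = S)
    (hminimal : ∀ x ∈ S,
      (∃ y, G.Adj x y ∧ y ∉ S) ∨
      (∃ y ∈ S, x ∈ L y ∧ ∃ z, G.Adj y z ∧ z ∉ S)) :
    ∀ a b, auxAdj G L a b → a ∈ S ∩ survive G L ∨ b ∈ S ∩ survive G L :=
  stmt15_general G L S hcover hclosed
end

section
/- Let H be a hedge graph in which every triangle is covered by at most two hedges, and let R(x) denote the set of hedges dominating hedge x. If U is a set of hedges whose removal makes H P_3-free and x ∈ U, then R(x) ⊆ U. -/
/-- Adjacency after deleting the set `U` of hedges, where `ℓ` assigns to each edge its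
hedge. -/
def delAdj {V Λ : Type*} (G : SimpleGraph V) (ℓ : Sym2 V → Λ) (U : Set Λ)
    (a b : V) : Prop :=
  G.Adj a b ∧ ℓ s(a, b) ∉ U

/-- `D(x)`: hedges `y` such that some triangle has exactly one edge in hedge `x` and its
other two edges in hedge `y`. -/
def Dset {V Λ : Type*} (G : SimpleGraph V) (ℓ : Sym2 V → Λ) (x : Λ) : Set Λ :=
  {y | y ≠ x ∧ ∃ a b c : V, G.Adj a b ∧ G.Adj b c ∧ G.Adj a c ∧
    ℓ s(a, c) = x ∧ ℓ s(a, b) = y ∧ ℓ s(b, c) = y}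

/-- `R(x)`: the hedges dominating `x`, i.e. admitting a chain `y = h₁, …, h_p = x` with
`hᵢ ∈ D(hᵢ₊₁)`. -/
def Rset {V Λ : Type*} (G : SimpleGraph V) (ℓ : Sym2 V → Λ) (x : Λ) : Set Λ :=
  {y | Relation.ReflTransGen (fun a b => a ∈ Dset G ℓ b) y x}

/- If `y ∈ D(x)` survived the deletion while `x` did not, the triangle witnessing `y ∈ D(x)`
would keep its two `y`-edges and lose its `x`-edge: an induced `P₃`. -/
theorem Dset_subset_of_mem {V Λ : Type*} (G : SimpleGraph V) (ℓ : Sym2 V → Λ) (U : Set Λ)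
    (hsol : ∀ a b c : V, delAdj G ℓ U a b → delAdj G ℓ U b c → a ≠ c → delAdj G ℓ U a c)
    {x : Λ} (hx : x ∈ U) : Dset G ℓ x ⊆ U := by
  rintro y ⟨-, a, b, c, hab, hbc, hac, rfl, rfl, hℓbc⟩
  by_contra hy
  exact (hsol a b c ⟨hab, hy⟩ ⟨hbc, hℓbc ▸ hy⟩ hac.ne).2 hx

theorem stmt17_general {V Λ : Type*} (G : SimpleGraph V) (ℓ : Sym2 V → Λ) (U : Set Λ)
    (hsol : ∀ a b c : V, delAdj G ℓ U a b → delAdj G ℓ U b c → a ≠ c → delAdj G ℓ U a c)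
    (x : Λ) (hx : x ∈ U) :
    Rset G ℓ x ⊆ U := by
  intro y hy
  induction hy using Relation.ReflTransGen.head_induction_on with
  | refl => exact hx
  | head hyz _ hz => exact Dset_subset_of_mem G ℓ U hsol hz hyz

/-- in a bi-hedge graph (every triangle covered by at most two hedges), if
removing the hedges of `U` yields a `P₃`-free graph and `x ∈ U`, then `R(x) ⊆ U`. -/
theorem stmt17 {V Λ : Type*} (G : SimpleGraph V) (ℓ : Sym2 V → Λ) (U : Set Λ)
    (hbi : ∀ a b c : V, G.Adj a b → G.Adj b c → G.Adj a c →
      (ℓ s(a, b) = ℓ s(b, c) ∨ ℓ s(b, c) = ℓ s(a, c) ∨ ℓ s(a, b) = ℓ s(a, c)))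
    (hsol : ∀ a b c : V, delAdj G ℓ U a b → delAdj G ℓ U b c → a ≠ c → delAdj G ℓ U a c)
    (x : Λ) (hx : x ∈ U) :
    Rset G ℓ x ⊆ U :=
  stmt17_general G ℓ U hsol x hx
end

section
/- Let H be a bi-hedge graph (every triangle covered by at most two hedges) and x a hedge. Every induced P_3 in the graph obtained from H by removing all hedges of R(x) is already an induced P_3 in H; i.e., no new induced P_3 on the same vertex triple is created by the removal. -/
section

variable {V Λ : Type*} {G : SimpleGraph V} {ℓ : Sym2 V → Λ} {x : Λ}

theorem mem_Rset_of_mem_Dset {y z : Λ} (hy : y ∈ Rset G ℓ x) (hz : z ∈ Dset G ℓ y) :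
    z ∈ Rset G ℓ x :=
  Relation.ReflTransGen.head hz hy

theorem mem_Rset_of_triangle {a b c : V} (hab : G.Adj a b) (hbc : G.Adj b c) (hac : G.Adj a c)
    (hsame : ℓ s(a, b) = ℓ s(b, c)) (hac_R : ℓ s(a, c) ∈ Rset G ℓ x) :
    ℓ s(a, b) ∈ Rset G ℓ x := by
  by_cases heq : ℓ s(a, b) = ℓ s(a, c)
  · exact heq ▸ hac_R
  · exact mem_Rset_of_mem_Dset hac_R ⟨heq, a, b, c, hab, hbc, hac, rfl, rfl, hsame.symm⟩

theorem edge_mem_Rset_of_triangle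
    (hbi : ∀ a b c : V, G.Adj a b → G.Adj b c → G.Adj a c →
      (ℓ s(a, b) = ℓ s(b, c) ∨ ℓ s(b, c) = ℓ s(a, c) ∨ ℓ s(a, b) = ℓ s(a, c)))
    {a b c : V} (hab : G.Adj a b) (hbc : G.Adj b c) (hac : G.Adj a c)
    (hac_R : ℓ s(a, c) ∈ Rset G ℓ x) :
    ℓ s(a, b) ∈ Rset G ℓ x ∨ ℓ s(b, c) ∈ Rset G ℓ x := by
  rcases hbi a b c hab hbc hac with h | h | h
  · exact .inl (mem_Rset_of_triangle hab hbc hac h hac_R)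
  · exact .inr (h ▸ hac_R)
  · exact .inl (h ▸ hac_R)

end

/-- in a bi-hedge graph, every induced `P₃` of the graph obtained by removing
all hedges of `R(x)` is already an induced `P₃` of `H`; no new induced `P₃` is created. -/
theorem stmt18 {V Λ : Type*} (G : SimpleGraph V) (ℓ : Sym2 V → Λ)
    (hbi : ∀ a b c : V, G.Adj a b → G.Adj b c → G.Adj a c →
      (ℓ s(a, b) = ℓ s(b, c) ∨ ℓ s(b, c) = ℓ s(a, c) ∨ ℓ s(a, b) = ℓ s(a, c)))
    (x : Λ) :
    ∀ a b c : V, delAdj G ℓ (Rset G ℓ x) a b → delAdj G ℓ (Rset G ℓ x) b c →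
      a ≠ c → ¬ delAdj G ℓ (Rset G ℓ x) a c →
      (G.Adj a b ∧ G.Adj b c ∧ ¬ G.Adj a c) := by
  intro a b c ⟨hab, hab_notR⟩ ⟨hbc, hbc_notR⟩ _ hac_del
  refine ⟨hab, hbc, fun hac => ?_⟩
  have hac_R : ℓ s(a, c) ∈ Rset G ℓ x := by
    by_contra h
    exact hac_del ⟨hac, h⟩
  exact (edge_mem_Rset_of_triangle hbi hab hbc hac hac_R).elim hab_notR hbc_notR
end
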